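/- arXiv:1803.03351 — 5 statements merged into one kernel-verified Lean document; each statement's English description precedes it below -/
import Mathlib

section
/- Let p be a prime and A ⊆ F_p with 0 ∉ A. Define R(A) as the set of matrices M = [[a,b],[c,d]] in SL_2(F_p) with a,b,c ∈ A. Then the cardinality of the product set R(A)·R(A) = {M·N : M, N ∈ R(A)} is at least |A|^2 · |{x : x ∈ A·A + A·A, x ≠ 0}|, where A·A + A·A = {a₁a₂ + a₃a₄ : aᵢ ∈ A}. -/
/-!
For `x = a₁a₂ + b₁c₂ ≠ 0` with `aᵢ, b₁, c₂ ∈ A`, multiply `M = [[a₁, b₁], [c, *]]` by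
`N = [[a₂, b], [c₂, *]]` for free `b, c ∈ A`. The product has top-left entry `x`, top-right entry
`(x b + b₁) / a₂` and bottom-left entry `(x c + c₂) / a₁`, so since `x ≠ 0` it determines `(b, c)`.
Hence each nonzero `x ∈ A·A + A·A` is the top-left entry of at least `|A|²` products, and distinct
`x` give distinct products.
-/

open Finset Pointwise

variable {K : Type*} [Field K]

def sl2OfEntries (a b c : K) : Matrix (Fin 2) (Fin 2) K :=
  !![a, b; c, (1 + b * c) / a]

theorem det_sl2OfEntries {a : K} (ha : a ≠ 0) (b c : K) : (sl2OfEntries a b c).det = 1 := by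
  rw [sl2OfEntries, Matrix.det_fin_two_of]
  field_simp
  ring

theorem sl2OfEntries_mul_apply_zero_zero (a₁ b₁ c a₂ b c₂ : K) :
    (sl2OfEntries a₁ b₁ c * sl2OfEntries a₂ b c₂) 0 0 = a₁ * a₂ + b₁ * c₂ := by
  simp [sl2OfEntries]

theorem sl2OfEntries_mul_apply_zero_one (a₁ b₁ c : K) {a₂ : K} (ha₂ : a₂ ≠ 0) (b c₂ : K) :
    (sl2OfEntries a₁ b₁ c * sl2OfEntries a₂ b c₂) 0 1 * a₂ = (a₁ * a₂ + b₁ * c₂) * b + b₁ := by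
  simp only [sl2OfEntries, Matrix.mul_fin_two, Matrix.of_apply, Matrix.cons_val',
    Matrix.cons_val_zero, Matrix.cons_val_one, Matrix.empty_val', Matrix.cons_val_fin_one]
  field_simp
  ring

theorem sl2OfEntries_mul_apply_one_zero {a₁ : K} (ha₁ : a₁ ≠ 0) (b₁ c a₂ b c₂ : K) :
    (sl2OfEntries a₁ b₁ c * sl2OfEntries a₂ b c₂) 1 0 * a₁ = (a₁ * a₂ + b₁ * c₂) * c + c₂ := by
  simp only [sl2OfEntries, Matrix.mul_fin_two, Matrix.of_apply, Matrix.cons_val',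
    Matrix.cons_val_zero, Matrix.cons_val_one, Matrix.empty_val', Matrix.cons_val_fin_one]
  field_simp
  ring

theorem injective_sl2OfEntries_mul {a₁ a₂ b₁ c₂ : K} (ha₁ : a₁ ≠ 0) (ha₂ : a₂ ≠ 0)
    (hx : a₁ * a₂ + b₁ * c₂ ≠ 0) :
    Function.Injective fun bc : K × K => sl2OfEntries a₁ b₁ bc.2 * sl2OfEntries a₂ bc.1 c₂ := by
  rintro ⟨b, c⟩ ⟨b', c'⟩ h
  have hb := congrArg (fun P => P 0 1 * a₂) h
  have hc := congrArg (fun P => P 1 0 * a₁) h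
  simp only [sl2OfEntries_mul_apply_zero_one _ _ _ ha₂,
    sl2OfEntries_mul_apply_one_zero ha₁] at hb hc
  simp only [Prod.mk.injEq]
  exact ⟨mul_left_cancel₀ hx (add_right_cancel hb), mul_left_cancel₀ hx (add_right_cancel hc)⟩

section Finite

variable [Fintype K] [DecidableEq K]

def sl2WithEntriesIn (A : Finset K) : Finset (Matrix (Fin 2) (Fin 2) K) :=
  univ.filter fun M => M.det = 1 ∧ M 0 0 ∈ A ∧ M 0 1 ∈ A ∧ M 1 0 ∈ A

theorem sl2OfEntries_mem_sl2WithEntriesIn {A : Finset K} (hA : (0 : K) ∉ A) {a b c : K}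
    (ha : a ∈ A) (hb : b ∈ A) (hc : c ∈ A) : sl2OfEntries a b c ∈ sl2WithEntriesIn A := by
  have ha₀ : a ≠ 0 := ne_of_mem_of_not_mem ha hA
  simpa [sl2WithEntriesIn, det_sl2OfEntries ha₀] using ⟨ha, hb, hc⟩

theorem card_sq_le_card_filter_apply_zero_zero_eq {A : Finset K} (hA : (0 : K) ∉ A) {x : K}
    (hx : x ∈ A * A + A * A) (hx₀ : x ≠ 0) :
    #A ^ 2 ≤ #{P ∈ image₂ (· * ·) (sl2WithEntriesIn A) (sl2WithEntriesIn A) | P 0 0 = x} := by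
  simp only [mem_add, mem_mul] at hx
  obtain ⟨_, ⟨a₁, ha₁, a₂, ha₂, rfl⟩, _, ⟨b₁, hb₁, c₂, hc₂, rfl⟩, rfl⟩ := hx
  have hmaps : ∀ bc ∈ A ×ˢ A, sl2OfEntries a₁ b₁ bc.2 * sl2OfEntries a₂ bc.1 c₂ ∈
      {P ∈ image₂ (· * ·) (sl2WithEntriesIn A) (sl2WithEntriesIn A) |
        P 0 0 = a₁ * a₂ + b₁ * c₂} := by
    rintro ⟨b, c⟩ hbc
    obtain ⟨hb, hc⟩ := mem_product.1 hbc
    refine mem_filter.2 ⟨mem_image₂_of_mem ?_ ?_, sl2OfEntries_mul_apply_zero_zero ..⟩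
    · exact sl2OfEntries_mem_sl2WithEntriesIn hA ha₁ hb₁ hc
    · exact sl2OfEntries_mem_sl2WithEntriesIn hA ha₂ hb hc₂
  have hinj := injective_sl2OfEntries_mul (ne_of_mem_of_not_mem ha₁ hA)
    (ne_of_mem_of_not_mem ha₂ hA) hx₀
  simpa [sq] using card_le_card_of_injOn _ hmaps hinj.injOn

end Finite

theorem stmt_0 (p : ℕ) [Fact p.Prime] (A : Finset (ZMod p)) (hA : (0 : ZMod p) ∉ A) :
    (Finset.image₂ (· * ·)
        ((Finset.univ : Finset (Matrix (Fin 2) (Fin 2) (ZMod p))).filter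
          (fun M => M.det = 1 ∧ M 0 0 ∈ A ∧ M 0 1 ∈ A ∧ M 1 0 ∈ A))
        ((Finset.univ : Finset (Matrix (Fin 2) (Fin 2) (ZMod p))).filter
          (fun M => M.det = 1 ∧ M 0 0 ∈ A ∧ M 0 1 ∈ A ∧ M 1 0 ∈ A))).card ≥
      A.card ^ 2 * ((A * A + A * A).erase 0).card := by
  set R := image₂ (· * ·) (sl2WithEntriesIn A) (sl2WithEntriesIn A)
  calc #A ^ 2 * #((A * A + A * A).erase 0)
      = ∑ x ∈ (A * A + A * A).erase 0, #A ^ 2 := by rw [sum_const, smul_eq_mul, mul_comm]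
    _ ≤ ∑ x ∈ (A * A + A * A).erase 0, #{P ∈ R | P 0 0 = x} := by
      refine sum_le_sum fun x hx => ?_
      obtain ⟨hx₀, hx⟩ := mem_erase.1 hx
      exact card_sq_le_card_filter_apply_zero_zero_eq hA hx hx₀
    _ = #{P ∈ R | P 0 0 ∈ (A * A + A * A).erase 0} := sum_card_fiberwise_eq_card_filter ..
    _ ≤ #R := card_filter_le _ _
end

section
/- Let F be a field and A, B finite nonempty subsets of F with |B| ≥ 2. With R(A,B) and E⁺(A, rB) as above, suppose |R(A,B)| ≥ |B|². Then there exists r ∈ R(A,B) with E⁺(A, rB) ≤ 2(|A||B| + |A|²), and consequently |A + rB| ≥ (|A||B|)²/(2(|A||B| + |A|²)); in particular either |A + rB| ≥ |A||B|/4 or |A + rB| ≥ |B|²/4. -/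
/-!
Summing over `r` the number of solutions of `a₁ + r b₁ = a₂ + r b₂`: a quadruple with `b₁ ≠ b₂`
solves it for at most one `r`, and one with `b₁ = b₂` only if also `a₁ = a₂`. Hence
`∑_{r ∈ R} E⁺(A, rB) ≤ |R||A||B| + |A|²|B|²`, and since `|B|² ≤ |R|` some `r ∈ R` has
`E⁺(A, rB) ≤ |A||B| + |A|²`. Cauchy–Schwarz over the fibres of `(a, b) ↦ a + r b` then gives
`|A|²|B|² ≤ |A + rB| E⁺(A, rB)`.
-/

open Finset Pointwise

/-- The ratio set `R(A,B)` as a finset. -/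
def ratioSet {F : Type*} [Field F] [DecidableEq F] (A B : Finset F) : Finset F :=
  ((A ×ˢ A) ×ˢ ((B ×ˢ B).filter (fun b => b.1 ≠ b.2))).image
    (fun x => (x.1.1 - x.1.2) / (x.2.1 - x.2.2))

/-- The additive energy `E⁺(A, rB)`. -/
def addEnergy {F : Type*} [Field F] [DecidableEq F] (A B : Finset F) (r : F) : ℕ :=
  ((A ×ˢ A ×ˢ B ×ˢ B).filter
    (fun x => x.1 + r * x.2.2.1 = x.2.1 + r * x.2.2.2)).card

theorem sq_card_le_card_image_mul_card_collisions {ι β : Type*} [DecidableEq β]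
    (s : Finset ι) (f : ι → β) :
    #s ^ 2 ≤ #(s.image f) * #{p ∈ s ×ˢ s | f p.1 = f p.2} := by
  set T := {p ∈ s ×ˢ s | f p.1 = f p.2}
  have hfiber (c : β) : #{p ∈ T | f p.1 = c} = #{x ∈ s | f x = c} ^ 2 := by
    rw [sq, ← card_product, ← filter_product, filter_filter]
    congr 1
    exact filter_congr fun p _ => ⟨fun h => ⟨h.2, h.1 ▸ h.2⟩, fun h => ⟨h.1.trans h.2.symm, h.1⟩⟩
  have hT : #T = ∑ c ∈ s.image f, #{x ∈ s | f x = c} ^ 2 := by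
    simp_rw [← hfiber, sum_card_fiberwise_eq_card_filter]
    refine congrArg card (filter_true_of_mem fun p hp => ?_).symm
    exact mem_image_of_mem f (mem_product.1 (mem_filter.1 hp).1).1
  calc #s ^ 2 = (∑ c ∈ s.image f, #{x ∈ s | f x = c}) ^ 2 := by rw [← card_eq_sum_card_image]
    _ ≤ #(s.image f) * ∑ c ∈ s.image f, #{x ∈ s | f x = c} ^ 2 := sq_sum_le_card_mul_sum_sq
    _ = #(s.image f) * #T := by rw [hT]

theorem le_div_four_or_le_div_four {a b : ℝ} (ha : 0 ≤ a) (hb : 0 ≤ b) :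
    a * b / 4 ≤ (a * b) ^ 2 / (2 * (a * b + a ^ 2)) ∨
      b ^ 2 / 4 ≤ (a * b) ^ 2 / (2 * (a * b + a ^ 2)) := by
  rcases ha.eq_or_lt with rfl | ha
  · simp
  have hden : 0 < 2 * (a * b + a ^ 2) := by positivity
  rcases le_total a b with hab | hba
  · left
    rw [div_le_div_iff₀ (by norm_num) hden]
    nlinarith [mul_nonneg (mul_nonneg ha.le hb) (sub_nonneg.2 hab)]
  · right
    rw [div_le_div_iff₀ (by norm_num) hden]
    nlinarith [mul_nonneg (mul_nonneg ha.le (sq_nonneg b)) (sub_nonneg.2 hba)]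

section
variable {F : Type*} [Field F] [DecidableEq F]

theorem addEnergy_eq_card_collisions (A B : Finset F) (r : F) :
    addEnergy A B r = #{p ∈ (A ×ˢ B) ×ˢ (A ×ˢ B) | p.1.1 + r * p.1.2 = p.2.1 + r * p.2.2} :=
  card_nbij' (fun x => ((x.1, x.2.2.1), (x.2.1, x.2.2.2))) (fun p => (p.1.1, p.2.1, p.1.2, p.2.2))
    (by intro x; simp +contextual) (by intro x; simp +contextual) (by intro x; simp)
    (by intro x; simp)

theorem le_card_add_smul_mul_addEnergy (A B : Finset F) (r : F) :
    #A ^ 2 * #B ^ 2 ≤ #(A + r • B) * addEnergy A B r := by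
  rw [addEnergy_eq_card_collisions, ← mul_pow, ← card_product]
  refine (sq_card_le_card_image_mul_card_collisions _ (fun x => x.1 + r * x.2)).trans ?_
  gcongr
  simp only [subset_iff, mem_image, mem_product, Prod.exists]
  rintro _ ⟨a, b, ⟨ha, hb⟩, rfl⟩
  exact add_mem_add ha (smul_mem_smul_finset hb)

theorem card_filter_add_mul_eq_le (R : Finset F) (a₁ a₂ b₁ b₂ : F) :
    #{r ∈ R | a₁ + r * b₁ = a₂ + r * b₂} ≤ 1 + if a₁ = a₂ ∧ b₁ = b₂ then #R else 0 := by
  by_cases hb : b₁ = b₂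
  · subst hb
    by_cases ha : a₁ = a₂ <;> simp [ha]
  · refine le_add_right (card_le_one.2 fun r hr s hs => ?_)
    simp only [mem_filter] at hr hs
    have : (r - s) * (b₁ - b₂) = 0 := by linear_combination hr.2 - hs.2
    simpa [sub_eq_zero, hb] using this

theorem sum_addEnergy_le (A B R : Finset F) :
    ∑ r ∈ R, addEnergy A B r ≤ #R * (#A * #B) + #A ^ 2 * #B ^ 2 :=
  calc ∑ r ∈ R, addEnergy A B r
      = ∑ x ∈ A ×ˢ A ×ˢ B ×ˢ B, #{r ∈ R | x.1 + r * x.2.2.1 = x.2.1 + r * x.2.2.2} := by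
        simp only [_root_.addEnergy, card_filter]
        exact sum_comm
    _ ≤ ∑ x ∈ A ×ˢ A ×ˢ B ×ˢ B, (1 + if x.1 = x.2.1 ∧ x.2.2.1 = x.2.2.2 then #R else 0) :=
        sum_le_sum fun x _ => card_filter_add_mul_eq_le R _ _ _ _
    _ = #R * (#A * #B) + #A ^ 2 * #B ^ 2 := by
        simp [sum_add_distrib, sum_product, ite_and]
        ring

theorem exists_addEnergy_le {A B R : Finset F} (hR : R.Nonempty) (hBR : #B ^ 2 ≤ #R) :
    ∃ r ∈ R, addEnergy A B r ≤ #A * #B + #A ^ 2 := by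
  refine exists_le_of_sum_le hR ((sum_addEnergy_le A B R).trans ?_)
  rw [sum_const, smul_eq_mul]
  nlinarith [Nat.mul_le_mul_left (#A ^ 2) hBR]

end

theorem stmt_7_general (F : Type*) [Field F] [DecidableEq F] (A B : Finset F)
    (hB : 2 ≤ B.card)
    (hR : B.card ^ 2 ≤ (ratioSet A B).card) :
    ∃ r ∈ ratioSet A B,
      addEnergy A B r ≤ 2 * (A.card * B.card + A.card ^ 2) ∧
      ((A + r • B).card : ℝ) ≥
        ((A.card : ℝ) * B.card) ^ 2 / (2 * ((A.card : ℝ) * B.card + (A.card : ℝ) ^ 2)) ∧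
      (((A + r • B).card : ℝ) ≥ (A.card : ℝ) * B.card / 4 ∨
        ((A + r • B).card : ℝ) ≥ (B.card : ℝ) ^ 2 / 4) := by
  have hRne : (ratioSet A B).Nonempty := card_pos.1 ((pow_pos (by omega) 2).trans_le hR)
  obtain ⟨r, hr, hE⟩ := exists_addEnergy_le (A := A) hRne hR
  have hE2 : addEnergy A B r ≤ 2 * (#A * #B + #A ^ 2) := by omega
  have hCS : ((#A : ℝ) * #B) ^ 2 ≤ #(A + r • B) * (2 * ((#A : ℝ) * #B + (#A : ℝ) ^ 2)) := by
    rw [mul_pow]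
    exact_mod_cast (le_card_add_smul_mul_addEnergy A B r).trans (Nat.mul_le_mul_left _ hE2)
  have hsize := div_le_of_le_mul₀ (by positivity) (by positivity) hCS
  exact ⟨r, hr, hE2, hsize,
    (le_div_four_or_le_div_four (Nat.cast_nonneg _) (Nat.cast_nonneg _)).imp
      hsize.trans' hsize.trans'⟩

theorem stmt_7 (F : Type*) [Field F] [DecidableEq F] (A B : Finset F)
    (hA : A.Nonempty) (hB : 2 ≤ B.card)
    (hR : B.card ^ 2 ≤ (ratioSet A B).card) :
    ∃ r ∈ ratioSet A B,
      addEnergy A B r ≤ 2 * (A.card * B.card + A.card ^ 2) ∧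
      ((A + r • B).card : ℝ) ≥
        ((A.card : ℝ) * B.card) ^ 2 / (2 * ((A.card : ℝ) * B.card + (A.card : ℝ) ^ 2)) ∧
      (((A + r • B).card : ℝ) ≥ (A.card : ℝ) * B.card / 4 ∨
        ((A + r • B).card : ℝ) ≥ (B.card : ℝ) ^ 2 / 4) :=
  stmt_7_general F A B hB hR
end

section
/- Let p be a prime and A ⊆ F_p finite. In the Heisenberg group H₂(F_p), the product set [A², A², 0]·[A², A², 0] has cardinality at least |A|^4 · |{x₁t₁ + x₂t₂ : x₁, t₁, x₂, t₂ ∈ A}|. -/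
open Finset

/-- The Heisenberg matrix `[x, y, z]` of degree 2. -/
def heis {p : ℕ} (x₁ x₂ y₁ y₂ z : ZMod p) : Matrix (Fin 4) (Fin 4) (ZMod p) :=
  !![1, x₁, x₂, z; 0, 1, 0, y₁; 0, 0, 1, y₂; 0, 0, 0, 1]

lemma heis_mul {p : ℕ} (x₁ x₂ y₁ y₂ z₁ z₂ t₁ t₂ : ZMod p) :
    heis x₁ x₂ y₁ y₂ 0 * heis z₁ z₂ t₁ t₂ 0 =
      heis (x₁ + z₁) (x₂ + z₂) (y₁ + t₁) (y₂ + t₂) (x₁ * t₁ + x₂ * t₂) := by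
  ext i j
  fin_cases i <;> fin_cases j <;>
    simp [heis, Matrix.mul_apply, Fin.sum_univ_four, Matrix.vecHead, Matrix.vecTail] <;> ring

lemma heis_inj {p : ℕ} {a b c d e a' b' c' d' e' : ZMod p}
    (h : heis a b c d e = heis a' b' c' d' e') :
    a = a' ∧ b = b' ∧ c = c' ∧ d = d' ∧ e = e' := by
  refine ⟨?_, ?_, ?_, ?_, ?_⟩
  · have := congrFun (congrFun h 0) 1; simpa [heis] using this
  · have := congrFun (congrFun h 0) 2; simpa [heis] using this
  · have := congrFun (congrFun h 1) 3; simpa [heis] using this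
  · have := congrFun (congrFun h 2) 3; simpa [heis] using this
  · have := congrFun (congrFun h 0) 3; simpa [heis] using this

theorem stmt_9 (p : ℕ) [Fact p.Prime] (A : Finset (ZMod p)) :
    {m : Matrix (Fin 4) (Fin 4) (ZMod p) |
        ∃ x₁ ∈ A, ∃ x₂ ∈ A, ∃ y₁ ∈ A, ∃ y₂ ∈ A, ∃ z₁ ∈ A, ∃ z₂ ∈ A, ∃ t₁ ∈ A, ∃ t₂ ∈ A,
          m = heis x₁ x₂ y₁ y₂ 0 * heis z₁ z₂ t₁ t₂ 0}.ncard ≥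
      A.card ^ 4 *
        {w : ZMod p | ∃ x₁ ∈ A, ∃ t₁ ∈ A, ∃ x₂ ∈ A, ∃ t₂ ∈ A,
          w = x₁ * t₁ + x₂ * t₂}.ncard := by
  classical
  haveI : NeZero p := ⟨(Fact.out : p.Prime).ne_zero⟩
  set S : Set (Matrix (Fin 4) (Fin 4) (ZMod p)) :=
    {m | ∃ x₁ ∈ A, ∃ x₂ ∈ A, ∃ y₁ ∈ A, ∃ y₂ ∈ A, ∃ z₁ ∈ A, ∃ z₂ ∈ A, ∃ t₁ ∈ A, ∃ t₂ ∈ A,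
      m = heis x₁ x₂ y₁ y₂ 0 * heis z₁ z₂ t₁ t₂ 0} with hS
  set W : Set (ZMod p) :=
    {w | ∃ x₁ ∈ A, ∃ t₁ ∈ A, ∃ x₂ ∈ A, ∃ t₂ ∈ A, w = x₁ * t₁ + x₂ * t₂} with hW
  -- choice of witnesses for each w ∈ W
  let P : ZMod p → ZMod p × ZMod p × ZMod p × ZMod p → Prop := fun w q =>
    q.1 ∈ A ∧ q.2.1 ∈ A ∧ q.2.2.1 ∈ A ∧ q.2.2.2 ∈ A ∧ w = q.1 * q.2.1 + q.2.2.1 * q.2.2.2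
  let wit : ZMod p → ZMod p × ZMod p × ZMod p × ZMod p := fun w =>
    if h : ∃ q, P w q then h.choose else (0, 0, 0, 0)
  have hwit : ∀ w ∈ W, P w (wit w) := by
    intro w hw
    obtain ⟨x₁, hx₁, t₁, ht₁, x₂, hx₂, t₂, ht₂, hw'⟩ := hw
    have h : ∃ q, P w q := ⟨(x₁, t₁, x₂, t₂), hx₁, ht₁, hx₂, ht₂, hw'⟩
    show P w (wit w)
    simp only [wit]
    rw [dif_pos h]
    exact h.choose_spec
  -- the injection
  let F : (ZMod p × ZMod p × ZMod p × ZMod p) × ZMod p →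
      Matrix (Fin 4) (Fin 4) (ZMod p) := fun q =>
    heis ((wit q.2).1 + q.1.1) ((wit q.2).2.2.1 + q.1.2.1)
      (q.1.2.2.1 + (wit q.2).2.1) (q.1.2.2.2 + (wit q.2).2.2.2) q.2
  have hWfin : W.Finite := Set.toFinite _
  have hSfin : S.Finite := Set.toFinite _
  set D : Finset ((ZMod p × ZMod p × ZMod p × ZMod p) × ZMod p) :=
    (A ×ˢ A ×ˢ A ×ˢ A) ×ˢ hWfin.toFinset with hD
  have hmaps : ∀ q ∈ D, F q ∈ hSfin.toFinset := by
    intro q hq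
    simp only [hD, Finset.mem_product, Set.Finite.mem_toFinset] at hq
    obtain ⟨⟨hz₁, hz₂, hy₁, hy₂⟩, hw⟩ := hq
    obtain ⟨ha₁, hb₁, ha₂, hb₂, hwe⟩ := hwit q.2 hw
    rw [Set.Finite.mem_toFinset, hS]
    refine ⟨(wit q.2).1, ha₁, (wit q.2).2.2.1, ha₂, q.1.2.2.1, hy₁, q.1.2.2.2, hy₂,
      q.1.1, hz₁, q.1.2.1, hz₂, (wit q.2).2.1, hb₁, (wit q.2).2.2.2, hb₂, ?_⟩
    rw [heis_mul]
    simp only [F]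
    rw [← hwe]
  have hinj : Set.InjOn F D := by
    intro q hq q' hq' h
    simp only [hD, Finset.mem_product, Set.Finite.mem_toFinset, Finset.coe_mem] at hq hq'
    obtain ⟨h1, h2, h3, h4, h5⟩ := heis_inj h
    have hw : q.2 = q'.2 := h5
    rw [hw] at h1 h2 h3 h4
    have e1 : q.1.1 = q'.1.1 := by exact add_left_cancel h1
    have e2 : q.1.2.1 = q'.1.2.1 := add_left_cancel h2
    have e3 : q.1.2.2.1 = q'.1.2.2.1 := add_right_cancel h3
    have e4 : q.1.2.2.2 = q'.1.2.2.2 := add_right_cancel h4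
    exact Prod.ext (Prod.ext e1 (Prod.ext e2 (Prod.ext e3 e4))) hw
  have hcard := Finset.card_le_card_of_injOn F hmaps hinj
  have hDcard : D.card = A.card ^ 4 * hWfin.toFinset.card := by
    rw [hD, Finset.card_product, Finset.card_product, Finset.card_product,
      Finset.card_product]
    ring
  rw [Set.ncard_eq_toFinset_card S hSfin, Set.ncard_eq_toFinset_card W hWfin]
  rw [hDcard] at hcard
  exact hcard
end

section
/- Let q be a prime power and A ⊆ F_q* a finite set. Then in the Heisenberg group H₁(F_q), |[A,A,0]·[A,A,0]| ≥ |A|² · max(|A+A|, |A·A|). -/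
open Finset Pointwise

/-- The Heisenberg matrix `[x, y, z]` of degree 1. -/
def heis1 {F : Type*} [Field F] (x y z : F) : Matrix (Fin 3) (Fin 3) F :=
  !![1, x, z; 0, 1, y; 0, 0, 1]

lemma heis1_mul {F : Type*} [Field F] (x y x' y' : F) :
    heis1 x y 0 * heis1 x' y' 0 = heis1 (x + x') (y + y') (x * y') := by
  simp [heis1, Matrix.mul_fin_three, add_comm]

lemma heis1_inj {F : Type*} [Field F] {x y z x' y' z' : F}
    (h : heis1 x y z = heis1 x' y' z') : x = x' ∧ y = y' ∧ z = z' := by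
  refine ⟨?_, ?_, ?_⟩
  · simpa [heis1] using congrFun (congrFun h 0) 1
  · simpa [heis1] using congrFun (congrFun h 1) 2
  · simpa [heis1] using congrFun (congrFun h 0) 2

theorem stmt_11 (F : Type*) [Field F] [Fintype F] [DecidableEq F]
    (A : Finset F) (hA : (0 : F) ∉ A) :
    {m : Matrix (Fin 3) (Fin 3) F |
        ∃ x ∈ A, ∃ y ∈ A, ∃ x' ∈ A, ∃ y' ∈ A,
          m = heis1 x y 0 * heis1 x' y' 0}.ncard ≥
      A.card ^ 2 * max (A + A).card (A * A).card := by
  set S : Set (Matrix (Fin 3) (Fin 3) F) :=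
    {m : Matrix (Fin 3) (Fin 3) F |
        ∃ x ∈ A, ∃ y ∈ A, ∃ x' ∈ A, ∃ y' ∈ A,
          m = heis1 x y 0 * heis1 x' y' 0} with hS
  -- choice function for sums
  have h1 : ∀ s : F, ∃ ab : F × F, s ∈ A + A → ab.1 ∈ A ∧ ab.2 ∈ A ∧ ab.1 + ab.2 = s := by
    intro s
    by_cases hs : s ∈ A + A
    · obtain ⟨a, ha, b, hb, hab⟩ := Finset.mem_add.mp hs
      exact ⟨(a, b), fun _ => ⟨ha, hb, hab⟩⟩
    · exact ⟨(0, 0), fun h => absurd h hs⟩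
  choose f hf using h1
  have h2 : ∀ s : F, ∃ ab : F × F, s ∈ A * A → ab.1 ∈ A ∧ ab.2 ∈ A ∧ ab.1 * ab.2 = s := by
    intro s
    by_cases hs : s ∈ A * A
    · obtain ⟨a, ha, b, hb, hab⟩ := Finset.mem_mul.mp hs
      exact ⟨(a, b), fun _ => ⟨ha, hb, hab⟩⟩
    · exact ⟨(0, 0), fun h => absurd h hs⟩
  choose g hg using h2
  have hbound : ∀ T : Finset (Matrix (Fin 3) (Fin 3) F), ↑T ⊆ S → T.card ≤ S.ncard := by
    intro T hT
    calc T.card = (↑T : Set _).ncard := (Set.ncard_coe_finset T).symm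
    _ ≤ S.ncard := Set.ncard_le_ncard hT (Set.toFinite S)
  -- bound via A + A
  have key1 : A.card ^ 2 * (A + A).card ≤ S.ncard := by
    set φ : F × F × F → Matrix (Fin 3) (Fin 3) F :=
      fun p => heis1 p.1 (p.2.1 + p.2.2) ((f p.1).1 * p.2.2) with hφ
    have hsub : ↑(((A + A) ×ˢ (A ×ˢ A)).image φ) ⊆ S := by
      intro m hm
      simp only [Finset.coe_image, Set.mem_image, Finset.mem_coe, Finset.mem_product] at hm
      obtain ⟨p, ⟨hs, hy, hy'⟩, rfl⟩ := hm
      obtain ⟨ha, hb, hab⟩ := hf p.1 hs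
      exact ⟨(f p.1).1, ha, p.2.1, hy, (f p.1).2, hb, p.2.2, hy',
        by rw [heis1_mul, hab]⟩
    have hinj : Set.InjOn φ ↑((A + A) ×ˢ (A ×ˢ A)) := by
      rintro ⟨ps, py, py'⟩ hp ⟨qs, qy, qy'⟩ hq h
      simp only [Finset.mem_coe, Finset.mem_product] at hp hq
      obtain ⟨e1, e2, e3⟩ := heis1_inj h
      simp only at e1 e2 e3 hp hq
      subst e1
      have ha0 : (f ps).1 ≠ 0 := fun h0 => hA (h0 ▸ (hf ps hp.1).1)
      have e2' : py' = qy' := by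
        rcases mul_left_cancel₀ ha0 e3 with h
        exact h
      subst e2'
      have : py = qy := add_right_cancel e2
      subst this
      rfl
    have hcard : (((A + A) ×ˢ (A ×ˢ A)).image φ).card = A.card ^ 2 * (A + A).card := by
      rw [Finset.card_image_of_injOn hinj, Finset.card_product, Finset.card_product]
      ring
    calc A.card ^ 2 * (A + A).card = (((A + A) ×ˢ (A ×ˢ A)).image φ).card := hcard.symm
    _ ≤ S.ncard := hbound _ hsub
  -- bound via A * A
  have key2 : A.card ^ 2 * (A * A).card ≤ S.ncard := by
    set φ : F × F × F → Matrix (Fin 3) (Fin 3) F :=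
      fun p => heis1 ((g p.1).1 + p.2.2) (p.2.1 + (g p.1).2) p.1 with hφ
    have hsub : ↑(((A * A) ×ˢ (A ×ˢ A)).image φ) ⊆ S := by
      intro m hm
      simp only [Finset.coe_image, Set.mem_image, Finset.mem_coe, Finset.mem_product] at hm
      obtain ⟨p, ⟨hs, hy, hy'⟩, rfl⟩ := hm
      obtain ⟨ha, hb, hab⟩ := hg p.1 hs
      exact ⟨(g p.1).1, ha, p.2.1, hy, p.2.2, hy', (g p.1).2, hb,
        by rw [heis1_mul, hab]⟩
    have hinj : Set.InjOn φ ↑((A * A) ×ˢ (A ×ˢ A)) := by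
      rintro ⟨ps, py, py'⟩ hp ⟨qs, qy, qy'⟩ hq h
      simp only [Finset.mem_coe, Finset.mem_product] at hp hq
      obtain ⟨e1, e2, e3⟩ := heis1_inj h
      simp only at e1 e2 e3 hp hq
      subst e3
      have hx : py' = qy' := add_left_cancel e1
      have hy : py = qy := add_right_cancel e2
      subst hx; subst hy; rfl
    have hcard : (((A * A) ×ˢ (A ×ˢ A)).image φ).card = A.card ^ 2 * (A * A).card := by
      rw [Finset.card_image_of_injOn hinj, Finset.card_product, Finset.card_product]
      ring
    calc A.card ^ 2 * (A * A).card = (((A * A) ×ˢ (A ×ˢ A)).image φ).card := hcard.symm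
    _ ≤ S.ncard := hbound _ hsub
  rcases max_choice (A + A).card (A * A).card with h | h <;> rw [h]
  · exact key1
  · exact key2
end

section
/- Let p be a prime and A ⊆ F_p finite with 0 ∉ A. For any x ∈ F_p with x ≠ 0, the size of A ∩ (B + x) (with B ⊆ F_p, 0 ∉ B, |A| = |B|) is at most (1/(|A||B|)) times the number of quadruples (u, u*, a, b) ∈ (AB)² × A × B satisfying u·b⁻¹ − u*·a⁻¹ = x, where AB = {ab : a ∈ A, b ∈ B}. -/
/-!
For `y ∈ A ∩ (B + x)`, `a ∈ A` and `b ∈ B`, the quadruple `(y b, a (y - x), a, b)` lies in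
`(AB)² × A × B` and satisfies `u b⁻¹ - u* a⁻¹ = y - (y - x) = x`. Since `y` is recovered from
`u = y b` and `b ≠ 0`, these quadruples are pairwise distinct, giving `|A ∩ (B + x)| |A| |B|` of them.
-/

open Finset Pointwise

variable {K : Type*} [Field K] [DecidableEq K]

def quadrupleReps (A B : Finset K) (x : K) : Finset (K × K × K × K) :=
  ((A * B) ×ˢ (A * B) ×ˢ A ×ˢ B).filter (fun q => q.1 * q.2.2.2⁻¹ - q.2.1 * q.2.2.1⁻¹ = x)

lemma card_inter_image_add_mul_le_card_quadrupleReps {A B : Finset K} (hA : 0 ∉ A) (hB : 0 ∉ B)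
    (x : K) : #(A ∩ B.image (· + x)) * (#A * #B) ≤ #(quadrupleReps A B x) := by
  rw [← card_product A B, ← card_product]
  refine card_le_card_of_injOn (fun t => (t.1 * t.2.2, t.2.1 * (t.1 - x), t.2.1, t.2.2)) ?_ ?_
  · rintro ⟨y, a, b⟩ ht
    simp only [coe_product, Set.mem_prod, mem_coe, mem_inter, mem_image] at ht
    obtain ⟨⟨hyA, b', hb', rfl⟩, ha, hb⟩ := ht
    have ha0 : a ≠ 0 := ne_of_mem_of_not_mem ha hA
    have hb0 : b ≠ 0 := ne_of_mem_of_not_mem hb hB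
    simp only [quadrupleReps, coe_filter, mem_product, Set.mem_ofPred_eq, add_sub_cancel_right]
    refine ⟨⟨mul_mem_mul hyA hb, mul_mem_mul ha hb', ha, hb⟩, ?_⟩
    field_simp
    ring
  · rintro ⟨y₁, a₁, b₁⟩ h₁ ⟨y₂, a₂, b₂⟩ - heq
    simp only [coe_product, Set.mem_prod, mem_coe] at h₁
    simp only [Prod.mk.injEq] at heq
    obtain ⟨hu, -, rfl, rfl⟩ := heq
    have hb0 : b₁ ≠ 0 := ne_of_mem_of_not_mem h₁.2.2 hB
    rw [mul_right_cancel₀ hb0 hu]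

theorem stmt_15_general (p : ℕ) [Fact p.Prime] (A B : Finset (ZMod p))
    (hA : (0 : ZMod p) ∉ A) (hB : (0 : ZMod p) ∉ B)
    (x : ZMod p) :
    ((A ∩ B.image (· + x)).card : ℝ) ≤
      (1 / ((A.card : ℝ) * B.card)) *
        (((A * B) ×ˢ (A * B) ×ˢ A ×ˢ B).filter
          (fun q => q.1 * q.2.2.2⁻¹ - q.2.1 * q.2.2.1⁻¹ = x)).card := by
  obtain hS | ⟨y, hy⟩ := (A ∩ B.image (· + x)).eq_empty_or_nonempty
  · rw [hS, card_empty, Nat.cast_zero]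
    positivity
  obtain ⟨hyA, hyB⟩ := mem_inter.1 hy
  have hAB : (0 : ℝ) < #A * #B := mul_pos (by exact_mod_cast card_pos.2 ⟨y, hyA⟩)
    (by exact_mod_cast (card_pos.2 ⟨y, hyB⟩).trans_le card_image_le)
  rw [one_div_mul_eq_div, le_div_iff₀ hAB]
  exact_mod_cast card_inter_image_add_mul_le_card_quadrupleReps hA hB x

theorem stmt_15 (p : ℕ) [Fact p.Prime] (A B : Finset (ZMod p))
    (hA : (0 : ZMod p) ∉ A) (hB : (0 : ZMod p) ∉ B) (hcard : A.card = B.card)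
    (x : ZMod p) (hx : x ≠ 0) :
    ((A ∩ B.image (· + x)).card : ℝ) ≤
      (1 / ((A.card : ℝ) * B.card)) *
        (((A * B) ×ˢ (A * B) ×ˢ A ×ˢ B).filter
          (fun q => q.1 * q.2.2.2⁻¹ - q.2.1 * q.2.2.1⁻¹ = x)).card :=
  stmt_15_general p A B hA hB x
end
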